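/- arXiv:2110.05644 — 8 statements merged into one kernel-verified Lean document; each statement's English description precedes it below -/
import Mathlib

section
/- A square matrix M is a P-matrix (all principal minors positive) if and only if for every nonzero vector x there exists an index i such that x_i(Mx)_i > 0. -/
open Matrix Finset

/-- The principal submatrix of `M` indexed by the finite set `α`. -/
def principalSubmatrix {n : ℕ} (M : Matrix (Fin n) (Fin n) ℝ) (α : Finset (Fin n)) :
    Matrix α α ℝ :=
  M.submatrix (fun i => (i : Fin n)) (fun j => (j : Fin n))

/-- `M` is a P-matrix: all principal minors are strictly positive. -/
def IsPMatrix {n : ℕ} (M : Matrix (Fin n) (Fin n) ℝ) : Prop :=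
  ∀ α : Finset (Fin n), 0 < (principalSubmatrix M α).det

variable {m : Type*} [Fintype m] [DecidableEq m]

/-- generalized P-property over an arbitrary finite index type -/
def genP (M : Matrix m m ℝ) : Prop :=
  ∀ s : Finset m, 0 < (M.submatrix (fun i : s => (i : m)) (fun j : s => (j : m))).det

lemma det_unitRows (M : Matrix m m ℝ) (s : Finset m) :
    (Matrix.of (s.piecewise (fun i => Pi.single i (1:ℝ)) (fun i => M i))).det
      = (M.submatrix (fun i : (sᶜ : Finset m) => (i : m))
          (fun j : (sᶜ : Finset m) => (j : m))).det := by
  classical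
  have h0 : ∀ i, i ∈ s → ∀ j, ¬ j ∈ s →
      (Matrix.of (s.piecewise (fun i => Pi.single i (1:ℝ)) (fun i => M i))) i j = 0 := by
    intro i hi j hj
    simp only [Matrix.of_apply, Finset.piecewise_eq_of_mem _ _ _ hi]
    exact Pi.single_eq_of_ne (fun h => hj (by rw [h]; exact hi)) 1
  rw [Matrix.twoBlockTriangular_det' _ _ h0]
  have h1 : ((Matrix.of (s.piecewise (fun i => Pi.single i (1:ℝ))
      (fun i => M i))).toSquareBlockProp (fun i => i ∈ s)) = 1 := by
    ext i j
    simp only [Matrix.toSquareBlockProp, Matrix.toBlock_apply, Matrix.of_apply,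
      Finset.piecewise_eq_of_mem _ _ _ i.2, Pi.single_apply, Matrix.one_apply]
    by_cases h : (i : m) = (j : m)
    · simp [h.symm, Subtype.ext h]
    · rw [if_neg (fun hh : (j:m) = (i:m) => h hh.symm),
        if_neg (fun hh : i = j => h (congrArg Subtype.val hh))]
  rw [h1]
  simp only [Matrix.det_one, one_mul]
  let e : ((sᶜ : Finset m) : Type _) ≃ {i // ¬ i ∈ s} :=
    Equiv.subtypeEquivRight (fun x => Finset.mem_compl)
  rw [← Matrix.det_submatrix_equiv_self e]
  congr 1
  ext i j
  have hi : ¬ (i : m) ∈ s := Finset.mem_compl.mp i.2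
  simp only [Matrix.submatrix_apply, Matrix.toSquareBlockProp, Matrix.toBlock_apply,
    Matrix.of_apply]
  rw [show ((e i : {i // ¬ i ∈ s}) : m) = (i : m) from rfl,
    Finset.piecewise_eq_of_notMem _ _ _ hi]
  rfl

lemma genP_det_add_diagonal_pos {M : Matrix m m ℝ} (hM : genP M) {d : m → ℝ}
    (hd : ∀ i, 0 ≤ d i) : 0 < (M + Matrix.diagonal d).det := by
  classical
  have hrow : ∀ i, Matrix.diagonal d i = d i • (Pi.single i 1 : m → ℝ) := by
    intro i; funext j
    simp only [Matrix.diagonal_apply, Pi.smul_apply, Pi.single_apply, smul_eq_mul]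
    by_cases h : i = j
    · simp [h]
    · rw [if_neg h, if_neg (fun hh : j = i => h hh.symm), mul_zero]
  have h1 : (M + Matrix.diagonal d).det
      = Matrix.detRowAlternating ((fun i => Matrix.diagonal d i) + (fun i => M i)) := by
    show Matrix.detRowAlternating (M + Matrix.diagonal d) = _
    congr 1
    funext i j
    exact add_comm _ _
  have h2 : Matrix.detRowAlternating ((fun i => Matrix.diagonal d i) + (fun i => M i))
      = ∑ s : Finset m,
          Matrix.detRowAlternating (s.piecewise (fun i => Matrix.diagonal d i) (fun i => M i)) :=
    (Matrix.detRowAlternating (R := ℝ) (n := m)).toMultilinearMap.map_add_univ _ _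
  rw [h1, h2]
  apply Finset.sum_pos'
  · intro s _
    set b : m → (m → ℝ) := s.piecewise (fun i => Pi.single i (1:ℝ)) (fun i => M i) with hb
    have harg : s.piecewise (fun i => Matrix.diagonal d i) (fun i => M i)
        = s.piecewise (fun i => d i • b i) b := by
      funext i
      by_cases hi : i ∈ s
      · rw [Finset.piecewise_eq_of_mem _ _ _ hi, Finset.piecewise_eq_of_mem _ _ _ hi,
          hb, Finset.piecewise_eq_of_mem _ _ _ hi, hrow]
      · rw [Finset.piecewise_eq_of_notMem _ _ _ hi, Finset.piecewise_eq_of_notMem _ _ _ hi,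
          hb, Finset.piecewise_eq_of_notMem _ _ _ hi]
    have h3 : Matrix.detRowAlternating (s.piecewise (fun i => d i • b i) b)
        = (∏ i ∈ s, d i) • Matrix.detRowAlternating b :=
      (Matrix.detRowAlternating (R := ℝ) (n := m)).toMultilinearMap.map_piecewise_smul d b s
    have h4 : Matrix.detRowAlternating b = (Matrix.of b).det := rfl
    rw [harg, h3, h4, smul_eq_mul, hb, det_unitRows]
    exact mul_nonneg (Finset.prod_nonneg (fun i _ => hd i)) (hM _).le
  · refine ⟨∅, Finset.mem_univ _, ?_⟩
    have h3 : Matrix.detRowAlternating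
        ((∅ : Finset m).piecewise (fun i => Matrix.diagonal d i) (fun i => M i))
        = (Matrix.of ((∅ : Finset m).piecewise (fun i => Pi.single i (1:ℝ))
            (fun i => M i))).det := by
      rw [Finset.piecewise_empty, Finset.piecewise_empty]
      rfl
    rw [h3, det_unitRows]
    exact hM _

lemma detPos_of_noSignReversal (N : Matrix m m ℝ)
    (h : ∀ x : m → ℝ, x ≠ 0 → ∃ i, 0 < x i * N.mulVec x i) : 0 < N.det := by
  classical
  set f : ℝ → ℝ := fun t => ((1 - t) • (1 : Matrix m m ℝ) + t • N).det with hf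
  have hcont : Continuous f := by
    apply Continuous.matrix_det
    exact ((continuous_const.sub continuous_id).smul continuous_const).add
      (continuous_id.smul continuous_const)
  have hne : ∀ t ∈ Set.Icc (0:ℝ) 1, f t ≠ 0 := by
    intro t ht h0
    obtain ⟨x, hx, hmx⟩ := (Matrix.exists_mulVec_eq_zero_iff).mpr h0
    obtain ⟨i, hi⟩ := h x hx
    have hxi : x i ≠ 0 := fun hz => by simp [hz] at hi
    have hmi : (1 - t) * x i + t * N.mulVec x i = 0 := by
      have := congrFun hmx i
      simpa [Matrix.add_mulVec, Matrix.smul_mulVec, Matrix.one_mulVec] using this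
    have hsq : 0 < x i * x i := mul_self_pos.mpr hxi
    have h3 : (1 - t) * (x i * x i) + t * (x i * N.mulVec x i) = 0 := by
      linear_combination x i * hmi
    rcases eq_or_lt_of_le ht.1 with h0t | h0t
    · rw [← h0t] at h3; nlinarith
    · nlinarith [mul_nonneg (sub_nonneg.mpr ht.2) hsq.le, mul_pos h0t hi]
  have hf0 : f 0 = 1 := by simp [hf]
  have hf1 : f 1 = N.det := by simp [hf]
  by_contra hle
  push_neg at hle
  have hlt : f 1 < 0 := lt_of_le_of_ne (hf1 ▸ hle) (by rw [hf1]; rw [← hf1]; exact hne 1 ⟨zero_le_one, le_refl 1⟩)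
  have hmem : (0:ℝ) ∈ f '' Set.Icc 0 1 := by
    apply intermediate_value_Icc' zero_le_one hcont.continuousOn
    rw [hf0]
    exact ⟨hlt.le, zero_le_one⟩
  obtain ⟨t, ht, hft⟩ := hmem
  exact hne t ht hft

lemma genP_principalSubmatrix {n : ℕ} {M : Matrix (Fin n) (Fin n) ℝ} (hM : IsPMatrix M)
    (α : Finset (Fin n)) : genP (principalSubmatrix M α) := by
  intro s
  classical
  set γ : Finset (Fin n) := s.image (fun i : α => (i : Fin n)) with hγ
  have hfun : ∀ i : s, ((i : α) : Fin n) ∈ γ := by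
    intro i
    exact Finset.mem_image_of_mem (fun j : α => (j : Fin n)) i.2
  let g : s → γ := fun i => ⟨((i : α) : Fin n), hfun i⟩
  have hginj : Function.Injective g := by
    intro a b hab
    have h1 : ((a : α) : Fin n) = ((b : α) : Fin n) := congrArg (fun z : γ => (z : Fin n)) hab
    exact Subtype.ext (Subtype.ext h1)
  have hcard : Fintype.card s = Fintype.card γ := by
    simp only [Fintype.card_coe, hγ]
    exact (Finset.card_image_of_injective s Subtype.val_injective).symm
  have hgbij : Function.Bijective g :=
    (Fintype.bijective_iff_injective_and_card g).mpr ⟨hginj, hcard⟩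
  let e : s ≃ γ := Equiv.ofBijective g hgbij
  have key : (principalSubmatrix M α).submatrix (fun i : s => (i : α)) (fun j : s => (j : α))
      = (principalSubmatrix M γ).submatrix e e := by
    ext i j
    rfl
  rw [key, Matrix.det_submatrix_equiv_self]
  exact hM γ

lemma sum_restrict {n : ℕ} (M : Matrix (Fin n) (Fin n) ℝ) (α : Finset (Fin n))
    (x : Fin n → ℝ) (hx : ∀ j, j ∉ α → x j = 0) (i : Fin n) :
    ∑ j : α, M i (j : Fin n) * x (j : Fin n) = M.mulVec x i := by
  show _ = ∑ j, M i j * x j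
  have h : ∑ j ∈ α, M i j * x j = ∑ j ∈ Finset.univ, M i j * x j :=
    Finset.sum_subset (Finset.subset_univ α)
      (fun j _ hj => by rw [hx j hj, mul_zero])
  rw [Finset.sum_coe_sort α (fun j => M i j * x j), h]

theorem pmatrix_iff_no_sign_reversing {n : ℕ} (M : Matrix (Fin n) (Fin n) ℝ) :
    IsPMatrix M ↔ ∀ x : Fin n → ℝ, x ≠ 0 → ∃ i, 0 < x i * (M.mulVec x) i := by
  classical
  constructor
  · intro hM x hx
    by_contra hcon
    push_neg at hcon
    set α : Finset (Fin n) := Finset.univ.filter (fun i => x i ≠ 0) with hα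
    have hmemα : ∀ i, i ∈ α ↔ x i ≠ 0 := by intro i; simp [hα]
    set x' : α → ℝ := fun i => x i with hx'
    set d : α → ℝ := fun i => -(M.mulVec x i) / x i with hd
    have hxne : ∀ i : α, x (i : Fin n) ≠ 0 := fun i => (hmemα i).mp i.2
    have hdnn : ∀ i : α, 0 ≤ d i := by
      intro i
      have h1 : x (i : Fin n) * M.mulVec x (i : Fin n) ≤ 0 := hcon _
      have h2 : d i = (-(M.mulVec x (i : Fin n)) * x (i : Fin n)) / (x (i : Fin n))^2 := by
        have hne := hxne i
        rw [hd]
        field_simp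
      rw [h2]
      exact div_nonneg (by nlinarith) (sq_nonneg _)
    have hzero : ∀ j, j ∉ α → x j = 0 := by
      intro j hj
      by_contra hc
      exact hj ((hmemα j).mpr hc)
    have hmv : ∀ i : α, (principalSubmatrix M α).mulVec x' i = M.mulVec x (i : Fin n) := by
      intro i
      exact sum_restrict M α x hzero (i : Fin n)
    have hker : ((principalSubmatrix M α) + Matrix.diagonal d).mulVec x' = 0 := by
      funext i
      rw [Matrix.add_mulVec, Pi.add_apply, Matrix.mulVec_diagonal, hmv i]
      show M.mulVec x (i : Fin n) + (-(M.mulVec x (i : Fin n)) / x (i : Fin n)) * x (i : Fin n)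
          = 0
      have := hxne i
      field_simp
      ring
    have hx'ne : x' ≠ 0 := by
      obtain ⟨i, hi⟩ := Function.ne_iff.mp hx
      have hiα : i ∈ α := (hmemα i).mpr (by simpa using hi)
      intro hz
      exact (hmemα i).mp hiα (by simpa using congrFun hz ⟨i, hiα⟩)
    have hdet0 : ((principalSubmatrix M α) + Matrix.diagonal d).det = 0 :=
      (Matrix.exists_mulVec_eq_zero_iff).mp ⟨x', hx'ne, hker⟩
    have hpos := genP_det_add_diagonal_pos (genP_principalSubmatrix hM α) hdnn
    rw [hdet0] at hpos
    exact lt_irrefl 0 hpos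
  · intro h α
    apply detPos_of_noSignReversal
    intro y hy
    set x : Fin n → ℝ := fun j => if hj : j ∈ α then y ⟨j, hj⟩ else 0 with hxdef
    have hxα : ∀ i : α, x (i : Fin n) = y i := by
      intro i
      simp only [hxdef]
      rw [dif_pos i.2]
    have hzero : ∀ j, j ∉ α → x j = 0 := by
      intro j hj
      simp only [hxdef]
      rw [dif_neg hj]
    have hxne : x ≠ 0 := by
      obtain ⟨i, hi⟩ := Function.ne_iff.mp hy
      intro hz
      apply hi
      have := congrFun hz (i : Fin n)
      rwa [hxα i] at this
    obtain ⟨i, hi⟩ := h x hxne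
    have hxi : x i ≠ 0 := fun hz => by simp [hz] at hi
    have hiα : i ∈ α := by
      by_contra hc
      exact hxi (hzero i hc)
    refine ⟨⟨i, hiα⟩, ?_⟩
    have hmv : (principalSubmatrix M α).mulVec y ⟨i, hiα⟩ = M.mulVec x i := by
      rw [← sum_restrict M α x hzero i]
      exact Finset.sum_congr rfl fun j _ => by rw [hxα j]; rfl
    rw [hmv, show y ⟨i, hiα⟩ = x i from (hxα ⟨i, hiα⟩).symm]
    exact hi
end

section
/- If M is an n×n P-matrix, then the only vector x ∈ ℝ^n satisfying Mx ≤ 0 (entrywise) and x ≥ 0 (entrywise) is the zero vector. -/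
set_option maxHeartbeats 1000000

open Matrix Finset

lemma det_updateRow_single {m : Type*} [Fintype m] [DecidableEq m] (B : Matrix m m ℝ) (a : m) :
    (B.updateRow a (Pi.single a 1)).det
      = (Matrix.toSquareBlockProp B (fun i => ¬ i = a)).det := by
  have hb : ∀ i, (fun i => i = a) i → ∀ j, ¬ (fun i => i = a) j →
      (B.updateRow a (Pi.single a 1)) i j = 0 := by
    rintro i rfl j hj
    rw [Matrix.updateRow_self, Pi.single_apply, if_neg hj]
  have hblocks := Matrix.twoBlockTriangular_det' (B.updateRow a (Pi.single a 1))
    (fun i => i = a) hb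
  have h2 : Matrix.toSquareBlockProp (B.updateRow a (Pi.single a 1)) (fun i => ¬ i = a)
      = Matrix.toSquareBlockProp B (fun i => ¬ i = a) := by
    ext i j
    simp only [Matrix.toSquareBlockProp_def, Matrix.of_apply]
    exact congrFun (Matrix.updateRow_ne (i.2 : ¬ (i:m) = a)) (j : m)
  rw [hblocks, h2]
  convert one_mul _
  haveI : Subsingleton {i : m // i = a} := ⟨fun x y => Subtype.ext (x.2.trans y.2.symm)⟩
  have hk : Matrix.toSquareBlockProp (B.updateRow a (Pi.single a 1)) (fun i => i = a)
      ⟨a, rfl⟩ ⟨a, rfl⟩ = 1 := by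
    simp only [Matrix.toSquareBlockProp_def, Matrix.of_apply]
    show (B.updateRow a (Pi.single a 1)) a a = 1
    rw [Matrix.updateRow_self, Pi.single_eq_same]
  rw [Subsingleton.elim (Subtype.fintype (fun i : m => i = a)) (Fintype.subtypeEq a)]
  exact (Matrix.det_eq_elem_of_subsingleton _ ⟨a, rfl⟩).trans hk


/-- Key lemma: P-matrix plus nonnegative diagonal has positive principal minors. -/
lemma pmatrix_add_diag_det_pos {n : ℕ} (M : Matrix (Fin n) (Fin n) ℝ)
    (hM : IsPMatrix M) :
    ∀ (k : ℕ) (S : Finset (Fin n)) (d : Fin n → ℝ), (∀ i, 0 ≤ d i) →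
      (S.filter (fun i => d i ≠ 0)).card = k →
      0 < (principalSubmatrix (M + Matrix.diagonal d) S).det := by
  intro k
  induction k with
  | zero =>
    intro S d hd hcard
    have hz : ∀ i ∈ S, d i = 0 := by
      intro i hi
      by_contra h
      have : i ∈ S.filter (fun i => d i ≠ 0) := Finset.mem_filter.2 ⟨hi, h⟩
      simp [Finset.card_eq_zero.mp hcard] at this
    have : principalSubmatrix (M + Matrix.diagonal d) S = principalSubmatrix M S := by
      ext i j
      simp only [principalSubmatrix, Matrix.submatrix_apply, Matrix.add_apply,
        Matrix.diagonal_apply]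
      rcases eq_or_ne (i : Fin n) (j : Fin n) with h | h
      · simp [h, hz _ (j.2)]
      · simp [h]
    rw [this]; exact hM S
  | succ k ih =>
    intro S d hd hcard
    have hne : (S.filter (fun i => d i ≠ 0)).Nonempty := by
      rw [← Finset.card_pos, hcard]; omega
    obtain ⟨a, ha⟩ := hne
    have haS : a ∈ S := (Finset.mem_filter.1 ha).1
    have hda : d a ≠ 0 := (Finset.mem_filter.1 ha).2
    have hdapos : 0 < d a := lt_of_le_of_ne (hd a) (Ne.symm hda)
    set d' : Fin n → ℝ := Function.update d a 0 with hd'def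
    have hd'nonneg : ∀ i, 0 ≤ d' i := by
      intro i
      rcases eq_or_ne i a with rfl | h
      · simp [hd'def]
      · simp [hd'def, Function.update_of_ne h]; exact hd i
    have hfilter : S.filter (fun i => d' i ≠ 0) = (S.filter (fun i => d i ≠ 0)).erase a := by
      ext i
      simp only [Finset.mem_filter, Finset.mem_erase]
      constructor
      · rintro ⟨hiS, hi⟩
        rcases eq_or_ne i a with rfl | h
        · simp [hd'def] at hi
        · exact ⟨h, hiS, by simpa [hd'def, Function.update_of_ne h] using hi⟩
      · rintro ⟨h, hiS, hi⟩
        exact ⟨hiS, by simpa [hd'def, Function.update_of_ne h] using hi⟩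
    have hcard' : (S.filter (fun i => d' i ≠ 0)).card = k := by
      rw [hfilter, Finset.card_erase_of_mem ha, hcard]; omega
    set B := principalSubmatrix (M + Matrix.diagonal d') S with hB
    set aS : {x // x ∈ S} := ⟨a, haS⟩ with haSdef
    have hA : principalSubmatrix (M + Matrix.diagonal d) S
        = B.updateRow aS (B aS + d a • (Pi.single aS 1 : {x // x ∈ S} → ℝ)) := by
      ext i j
      rcases eq_or_ne i aS with rfl | hi
      · rw [Matrix.updateRow_self]
        simp only [principalSubmatrix, Matrix.submatrix_apply, Matrix.add_apply, hB,
          Pi.add_apply, Pi.smul_apply, smul_eq_mul]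
        rcases eq_or_ne j aS with rfl | hj
        · simp [Matrix.diagonal_apply, hd'def, haSdef]
        · have hj' : (aS : Fin n) ≠ (j : Fin n) := fun h => hj (Subtype.ext h.symm)
          simp [Matrix.diagonal_apply, hj', Pi.single_apply, hj]
      · rw [Matrix.updateRow_ne hi]
        have hi' : (i : Fin n) ≠ a := fun h => hi (Subtype.ext h)
        simp only [principalSubmatrix, Matrix.submatrix_apply, Matrix.add_apply, hB]
        congr 1
        rcases eq_or_ne (i : Fin n) (j : Fin n) with h | h
        · rw [Matrix.diagonal_apply, Matrix.diagonal_apply, if_pos h, if_pos h, hd'def,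
            Function.update_of_ne hi']
        · simp [Matrix.diagonal_apply, h]
    rw [hA, Matrix.det_updateRow_add, Matrix.updateRow_eq_self, Matrix.det_updateRow_smul]
    have hdetB : 0 < B.det := ih S d' hd'nonneg hcard'
    have hdetC : (B.updateRow aS ((Pi.single aS 1 : {x // x ∈ S} → ℝ))).det
        = (Matrix.toSquareBlockProp B (fun i => ¬ i = aS)).det :=
      det_updateRow_single B aS
    have h2 : 0 < (Matrix.toSquareBlockProp B (fun i => ¬ i = aS)).det := by
      let e : {x // x ∈ S.erase a} ≃ {i : {x // x ∈ S} // ¬ i = aS} :=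
        { toFun := fun i => ⟨⟨i.1, Finset.mem_of_mem_erase i.2⟩,
            fun h => (Finset.mem_erase.1 i.2).1 (congrArg Subtype.val h)⟩
          invFun := fun j => ⟨j.1.1, Finset.mem_erase.2
            ⟨fun h => j.2 (Subtype.ext h), j.1.2⟩⟩
          left_inv := fun i => rfl
          right_inv := fun j => rfl }
      have hsub : (Matrix.toSquareBlockProp B (fun i => ¬ i = aS)).submatrix e e
          = principalSubmatrix (M + Matrix.diagonal d') (S.erase a) := by
        ext i j
        simp only [Matrix.submatrix_apply, Matrix.toSquareBlockProp_def, Matrix.of_apply,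
          hB, principalSubmatrix]
        rfl
      have hpos := ih (S.erase a) d' hd'nonneg (by
        have heq : (S.erase a).filter (fun i => d' i ≠ 0) = S.filter (fun i => d' i ≠ 0) := by
          ext i
          simp only [Finset.mem_filter, Finset.mem_erase]
          rcases eq_or_ne i a with rfl | h
          · simp [hd'def]
          · tauto
        rw [heq, hcard'])
      rw [← hsub, Matrix.det_submatrix_equiv_self] at hpos
      exact hpos
    rw [hdetC]
    positivity

theorem pmatrix_trivial_nonneg_solution {n : ℕ} (M : Matrix (Fin n) (Fin n) ℝ)
    (hM : IsPMatrix M) (x : Fin n → ℝ)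
    (hMx : ∀ i, M.mulVec x i ≤ 0) (hx : ∀ i, 0 ≤ x i) : x = 0 := by
  classical
  by_contra hx0
  set S : Finset (Fin n) := Finset.univ.filter (fun i => x i ≠ 0) with hS
  have hmemS : ∀ i, i ∈ S ↔ x i ≠ 0 := by intro i; simp [hS]
  have hSne : S.Nonempty := by
    rcases Function.ne_iff.1 hx0 with ⟨i, hi⟩
    exact ⟨i, (hmemS i).2 hi⟩
  have hxpos : ∀ i ∈ S, 0 < x i := fun i hi =>
    lt_of_le_of_ne (hx i) (Ne.symm ((hmemS i).1 hi))
  set d : Fin n → ℝ := fun i => if x i ≠ 0 then -(M.mulVec x i) / x i else 0 with hd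
  have hdnn : ∀ i, 0 ≤ d i := by
    intro i
    rw [hd]
    dsimp only
    split
    · exact div_nonneg (by linarith [hMx i]) (hx i)
    · exact le_rfl
  have hdet : 0 < (principalSubmatrix (M + Matrix.diagonal d) S).det :=
    pmatrix_add_diag_det_pos M hM _ S d hdnn rfl
  set v : {i // i ∈ S} → ℝ := fun i => x i with hv
  have hv0 : (principalSubmatrix (M + Matrix.diagonal d) S).mulVec v = 0 := by
    funext i
    have hiS : (i : Fin n) ∈ S := i.2
    have hxi : x i ≠ 0 := (hmemS _).1 hiS
    have step1 : (principalSubmatrix (M + Matrix.diagonal d) S).mulVec v i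
        = ∑ j ∈ S, (M + Matrix.diagonal d) (i : Fin n) j * x j := by
      rw [Matrix.mulVec, dotProduct]
      rw [← Finset.sum_coe_sort S (fun j => (M + Matrix.diagonal d) (i : Fin n) j * x j)]
      rfl
    rw [step1]
    have step2 : ∑ j ∈ S, (M + Matrix.diagonal d) (i : Fin n) j * x j
        = (∑ j ∈ S, M (i : Fin n) j * x j) + d i * x i := by
      simp only [Matrix.add_apply, add_mul, Finset.sum_add_distrib]
      congr 1
      rw [Finset.sum_eq_single (i : Fin n)]
      · simp [Matrix.diagonal_apply]
      · intro b _ hb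
        simp [Matrix.diagonal_apply, Ne.symm hb]
      · intro h
        exact absurd hiS h
    have step3 : ∑ j ∈ S, M (i : Fin n) j * x j = M.mulVec x i := by
      rw [Matrix.mulVec, dotProduct]
      apply Finset.sum_subset (Finset.subset_univ S)
      intro j _ hj
      have : x j = 0 := by
        by_contra h
        exact hj ((hmemS j).2 h)
      simp [this]
    have step4 : d i * x i = -(M.mulVec x i) := by
      rw [hd]
      dsimp only
      rw [if_pos hxi, div_mul_cancel₀ _ hxi]
    rw [step2, step3, step4]
    simp
  have hveq : v = 0 := Matrix.eq_zero_of_mulVec_eq_zero (ne_of_gt hdet) hv0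
  obtain ⟨a, haS⟩ := hSne
  have : x a = 0 := congrFun hveq ⟨a, haS⟩
  exact (hxpos a haS).ne' this
end

section
/- For a square matrix M and subset α of [n], the matrix B_α(M) whose j-th column is -M_{•j} for j ∈ α and e_j for j ∉ α satisfies det(B_α(M)) = (-1)^{|α|} det(M_{αα}), where M_{αα} is the principal submatrix indexed by α. -/
/-- The matrix `B_α(M)` whose `j`-th column is `-M_{•j}` for `j ∈ α` and the
standard basis vector `e_j` otherwise. -/
def Bmat {n : ℕ} (M : Matrix (Fin n) (Fin n) ℝ) (α : Finset (Fin n)) :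
    Matrix (Fin n) (Fin n) ℝ :=
  fun i j => if j ∈ α then -M i j else if i = j then 1 else 0

theorem det_Bmat {n : ℕ} (M : Matrix (Fin n) (Fin n) ℝ) (α : Finset (Fin n)) :
    (Bmat M α).det = (-1 : ℝ) ^ α.card * (principalSubmatrix M α).det := by
  classical
  let e : {i : Fin n // i ∈ α} ⊕ {i : Fin n // ¬ i ∈ α} ≃ Fin n :=
    Equiv.sumCompl (fun i => i ∈ α)
  have h : (Bmat M α).submatrix e e =
      Matrix.fromBlocks (-(principalSubmatrix M α)) 0
        (Matrix.of fun (i : {x : Fin n // ¬ x ∈ α}) (j : {x : Fin n // x ∈ α}) => -M i j) 1 := by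
    ext i j
    cases i with
    | inl i =>
      cases j with
      | inl j => simp [e, Bmat, principalSubmatrix, j.2]
      | inr j =>
        have : (i : Fin n) ≠ (j : Fin n) := by
          intro h; exact j.2 (h ▸ i.2)
        simp [e, Bmat, j.2, this]
    | inr i =>
      cases j with
      | inl j => simp [e, Bmat, j.2]
      | inr j =>
        have : ((i : Fin n) = (j : Fin n)) ↔ i = j := Subtype.coe_inj
        simp [e, Bmat, j.2, Matrix.one_apply, this]
  rw [← Matrix.det_submatrix_equiv_self e, h, Matrix.det_fromBlocks_zero₁₂,
    Matrix.det_one, mul_one, Matrix.det_neg, Fintype.card_coe]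
end

section
/- If M is an n×n real matrix with det(M_{αα}) ≤ 0 for some subset α, then there exists a nonzero vector x ∈ ℝ^n with x_i(Mx)_i ≤ 0 for every i. -/
lemma exists_nonpos_eigen {m : Type*} [Fintype m] [DecidableEq m] [Nonempty m]
    (A : Matrix m m ℝ) (hdet : A.det ≤ 0) :
    ∃ t : ℝ, t ≤ 0 ∧ ∃ v : m → ℝ, v ≠ 0 ∧ A.mulVec v = t • v := by
  have hg : Continuous fun e : ℝ => (e • A + (1 : Matrix m m ℝ)).det :=
    ((continuous_id.smul continuous_const).add continuous_const).matrix_det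
  have h1 : (0:ℝ) < ((0:ℝ) • A + 1).det := by simp
  have hev : ∀ᶠ e in nhds (0:ℝ), 0 < (e • A + 1).det :=
    (hg.tendsto 0).eventually (eventually_gt_nhds h1)
  obtain ⟨δ, hδ, h⟩ := Metric.eventually_nhds_iff.mp hev
  set ε := δ / 2 with hε
  have hεpos : 0 < ε := by positivity
  have hεlt : dist ε 0 < δ := by
    rw [Real.dist_eq, sub_zero, abs_of_pos hεpos]; linarith
  have hgε : 0 < (ε • A + 1).det := h hεlt
  have hkey : ε • (A + ε⁻¹ • (1 : Matrix m m ℝ)) = ε • A + 1 := by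
    rw [smul_add, smul_smul, mul_inv_cancel₀ hεpos.ne', one_smul]
  have hdetpos : 0 < (A + ε⁻¹ • (1 : Matrix m m ℝ)).det := by
    have hds := Matrix.det_smul (A + ε⁻¹ • (1 : Matrix m m ℝ)) ε
    rw [hkey] at hds
    have hpow : 0 < ε ^ Fintype.card m := pow_pos hεpos _
    nlinarith [hds]
  set f := fun t : ℝ => (A - t • (1 : Matrix m m ℝ)).det with hf
  have hcont : Continuous f :=
    (continuous_const.sub (continuous_id.smul continuous_const)).matrix_det
  have hfa : f (-ε⁻¹) = (A + ε⁻¹ • (1 : Matrix m m ℝ)).det := by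
    simp [hf, sub_neg_eq_add, neg_smul]
  have hf0 : f 0 = A.det := by simp [hf]
  have hab : (-ε⁻¹ : ℝ) ≤ 0 := by
    have : (0:ℝ) < ε⁻¹ := by positivity
    linarith
  have hsub : Set.Icc (f 0) (f (-ε⁻¹)) ⊆ f '' Set.Icc (-ε⁻¹) 0 :=
    intermediate_value_Icc' hab hcont.continuousOn
  have h0mem : (0:ℝ) ∈ Set.Icc (f 0) (f (-ε⁻¹)) := by
    constructor
    · rw [hf0]; exact hdet
    · rw [hfa]; exact hdetpos.le
  obtain ⟨t, ht, hft⟩ := hsub h0mem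
  obtain ⟨v, hv, hmul⟩ := (Matrix.exists_mulVec_eq_zero_iff).mpr hft
  refine ⟨t, ht.2, v, hv, ?_⟩
  have hexp : (A - t • 1).mulVec v = A.mulVec v - t • v := by
    rw [Matrix.sub_mulVec, Matrix.smul_mulVec, Matrix.one_mulVec]
  rw [hexp] at hmul
  exact sub_eq_zero.mp hmul

theorem nonpos_minor_to_sign_reversing {n : ℕ} (M : Matrix (Fin n) (Fin n) ℝ)
    (α : Finset (Fin n)) (hne : α.Nonempty)
    (hdet : (principalSubmatrix M α).det ≤ 0) :
    ∃ x : Fin n → ℝ, x ≠ 0 ∧ ∀ i, x i * M.mulVec x i ≤ 0 := by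
  have : Nonempty ↥α := hne.to_subtype
  obtain ⟨t, ht, v, hv, hmul⟩ := exists_nonpos_eigen (principalSubmatrix M α) hdet
  set x : Fin n → ℝ := fun i => if h : i ∈ α then v ⟨i, h⟩ else 0 with hx
  have hxcoe : ∀ j : ↥α, x (j : Fin n) = v j := by
    intro j
    simp only [hx, dif_pos j.2]
  refine ⟨x, ?_, ?_⟩
  · intro hx0
    apply hv
    funext j
    have := congrFun hx0 (j : Fin n)
    rwa [hxcoe j] at this
  · intro i
    by_cases hi : i ∈ α
    · have hMx : M.mulVec x i = t * v ⟨i, hi⟩ := by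
        have h1 : M.mulVec x i = ∑ j : Fin n, M i j * x j := by
          simp [Matrix.mulVec, dotProduct]
        have h2 : ∑ j : Fin n, M i j * x j = ∑ j ∈ α, M i j * x j := by
          refine (Finset.sum_subset (Finset.subset_univ α) ?_).symm
          intro j _ hj
          simp [hx, dif_neg hj]
        have h3 : ∑ j ∈ α, M i j * x j = ∑ j : ↥α, M i (j : Fin n) * v j := by
          rw [← Finset.sum_attach α (fun j => M i j * x j)]
          exact Finset.sum_congr rfl fun j _ => by rw [hxcoe j]
        have h4 : (principalSubmatrix M α).mulVec v ⟨i, hi⟩ =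
            ∑ j : ↥α, M i (j : Fin n) * v j := by
          simp [Matrix.mulVec, dotProduct, principalSubmatrix, Matrix.submatrix]
        have h5 := congrFun hmul ⟨i, hi⟩
        rw [h4] at h5
        rw [h1, h2, h3, h5]
        simp
      have hxi : x i = v ⟨i, hi⟩ := by simp [hx, dif_pos hi]
      rw [hMx, hxi]
      nlinarith [mul_self_nonneg (v ⟨i, hi⟩)]
    · have hxi : x i = 0 := by simp [hx, dif_neg hi]
      rw [hxi]; simp
end

section
/- Suppose M is invertible, x > 0 entrywise, Mx ≤ 0 entrywise, column i of M^{-1} has a positive entry, θ = min over j with (M^{-1})_{ji} > 0 of x_j/(M^{-1})_{ji}, and y = x - θ·(M^{-1})_{•i}. Then y ≥ 0, My ≤ 0, and y_k = 0 for some index k achieving the minimum. -/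
theorem reduce_sign_reversing {n : ℕ} (M : Matrix (Fin n) (Fin n) ℝ)
    (hM : IsUnit M.det) (x : Fin n → ℝ) (hx : ∀ j, 0 < x j)
    (hMx : ∀ j, M.mulVec x j ≤ 0) (i : Fin n)
    (s : Finset (Fin n)) (hs : s = Finset.univ.filter (fun j => 0 < M⁻¹ j i))
    (hne : s.Nonempty)
    (θ : ℝ) (hθ : θ = s.inf' (hs ▸ hne) (fun j => x j / M⁻¹ j i))
    (y : Fin n → ℝ) (hy : y = fun j => x j - θ * M⁻¹ j i) :
    (∀ j, 0 ≤ y j) ∧ (∀ j, M.mulVec y j ≤ 0) ∧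
      ∃ k ∈ s, x k / M⁻¹ k i = θ ∧ y k = 0 := by
  have hne' : s.Nonempty := hne
  have hmem : ∀ j ∈ s, 0 < M⁻¹ j i := by
    intro j hj
    rw [hs] at hj
    exact (Finset.mem_filter.mp hj).2
  -- θ achieved at some k
  obtain ⟨k, hk, hkmin⟩ := s.exists_mem_eq_inf' (hs ▸ hne) (fun j => x j / M⁻¹ j i)
  have hki : 0 < M⁻¹ k i := hmem k hk
  have hθk : θ = x k / M⁻¹ k i := by rw [hθ, hkmin]
  have hθpos : 0 < θ := by
    rw [hθk]; exact div_pos (hx k) hki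
  have hθle : ∀ j ∈ s, θ ≤ x j / M⁻¹ j i := by
    intro j hj
    rw [hθ]
    exact Finset.inf'_le _ hj
  have hy0 : ∀ j, 0 ≤ y j := by
    intro j
    rw [hy]
    by_cases hj : 0 < M⁻¹ j i
    · have hjs : j ∈ s := by rw [hs]; exact Finset.mem_filter.mpr ⟨Finset.mem_univ j, hj⟩
      have := hθle j hjs
      have : θ * M⁻¹ j i ≤ x j := by
        rw [le_div_iff₀ hj] at this; linarith
      simpa using this
    · push_neg at hj
      have : θ * M⁻¹ j i ≤ 0 := mul_nonpos_of_nonneg_of_nonpos hθpos.le hj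
      have := (hx j).le
      simp only
      linarith
  refine ⟨hy0, ?_, k, hk, hθk.symm, ?_⟩
  · intro j
    have hMinv : M.mulVec (fun l => M⁻¹ l i) j = (1 : Matrix (Fin n) (Fin n) ℝ) j i := by
      have := Matrix.mul_nonsing_inv M hM
      calc M.mulVec (fun l => M⁻¹ l i) j = (M * M⁻¹) j i := by
            simp [Matrix.mulVec, Matrix.mul_apply, dotProduct]
        _ = (1 : Matrix (Fin n) (Fin n) ℝ) j i := by rw [this]
    have hyx : y = fun l => x l - θ * M⁻¹ l i := hy
    have : M.mulVec y j = M.mulVec x j - θ * M.mulVec (fun l => M⁻¹ l i) j := by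
      rw [hyx]
      simp only [Matrix.mulVec, dotProduct, mul_sub, Finset.sum_sub_distrib,
        Finset.mul_sum]
      congr 1
      exact Finset.sum_congr rfl fun l _ => by ring
    rw [this, hMinv, Matrix.one_apply]
    by_cases hji : j = i
    · simp [hji]
      have := hMx i
      subst hji
      linarith
    · simp [hji]
      exact hMx j
  · rw [hy]
    simp only
    rw [hθk, div_mul_cancel₀ _ hki.ne']
    ring
end

section
/- If det(M_{αα}) ≤ 0 for some subset α, then there is a subset α' ⊆ α such that either det(M_{α'α'}) = 0, or det(M_{α'α'}) < 0 and det(M_{(α'-i)(α'-i)}) > 0 for some i ∈ α'. -/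
theorem minimal_nonpos_minor_witness {n : ℕ} (M : Matrix (Fin n) (Fin n) ℝ)
    (α : Finset (Fin n)) (hdet : (principalSubmatrix M α).det ≤ 0) :
    ∃ α' ⊆ α, (principalSubmatrix M α').det = 0 ∨
      ((principalSubmatrix M α').det < 0 ∧
        ∃ i ∈ α', 0 < (principalSubmatrix M (α'.erase i)).det) := by
  induction α using Finset.strongInduction with
  | _ α ih =>
    by_cases h : ∃ β ⊂ α, (principalSubmatrix M β).det ≤ 0
    · obtain ⟨β, hβ, hd⟩ := h
      obtain ⟨α', hsub, hc⟩ := ih β hβ hd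
      exact ⟨α', hsub.trans hβ.subset, hc⟩
    · push_neg at h
      rcases eq_or_lt_of_le hdet with heq | hlt
      · exact ⟨α, subset_rfl, Or.inl heq⟩
      · have hne : α.Nonempty := by
          by_contra hne
          rw [Finset.not_nonempty_iff_eq_empty] at hne
          subst hne
          have h1 : (principalSubmatrix M ∅).det = 1 := Matrix.det_isEmpty
          linarith
        obtain ⟨i, hi⟩ := hne
        exact ⟨α, subset_rfl, Or.inr ⟨hlt, i, hi, h _ (Finset.erase_ssubset hi)⟩⟩
end

section
/- Suppose α = β ∪ {i} with i ∉ β, det(M_{αα}) < 0, det(M_{ββ}) > 0, and q is such that both (B_α(M)^{-1}q)_i and (B_β(M)^{-1}q)_i are nonzero. Then (B_α(M)^{-1}q)_i and (B_β(M)^{-1}q)_i have the same sign, so the edge {α, β} of the hypercube has the same orientation from both endpoints, violating the USO edge condition. -/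
lemma Bmat_det {n : ℕ} (M : Matrix (Fin n) (Fin n) ℝ) (γ : Finset (Fin n)) :
    (Bmat M γ).det = (-1) ^ γ.card * (principalSubmatrix M γ).det := by
  classical
  set s : Set (Fin n) := (γ : Set (Fin n)) with hs
  let e : (s : Type) ⊕ ((sᶜ : Set (Fin n)) : Type) ≃ Fin n := Equiv.Set.sumCompl s
  let A : Matrix s s ℝ := fun p q => -M (p : Fin n) (q : Fin n)
  let C : Matrix ((sᶜ : Set (Fin n)) : Type) s ℝ := fun p q => -M (p : Fin n) (q : Fin n)
  have h1 : (Bmat M γ).det = ((Bmat M γ).submatrix e e).det :=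
    (Matrix.det_submatrix_equiv_self e _).symm
  have h2 : (Bmat M γ).submatrix e e = Matrix.fromBlocks A 0 C 1 := by
    ext a b
    cases a with
    | inl a =>
      cases b with
      | inl b =>
        have hb : (b : Fin n) ∈ γ := b.2
        simp [e, A, Bmat, hb]; rfl
      | inr b =>
        have hb : (b : Fin n) ∉ γ := b.2
        have hab : (a : Fin n) ≠ (b : Fin n) := fun h => hb (h ▸ a.2)
        simp [e, Bmat, hb, hab]
    | inr a =>
      cases b with
      | inl b =>
        have hb : (b : Fin n) ∈ γ := b.2
        simp [e, C, Bmat, hb]; rfl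
      | inr b =>
        have hb : (b : Fin n) ∉ γ := b.2
        have hioi : ((a : Fin n) = (b : Fin n)) ↔ a = b := Subtype.coe_injective.eq_iff
        simp [e, Bmat, hb, Matrix.one_apply, hioi]
  let e₁ : (s : Type) ≃ ((γ : Type) : Type) := Equiv.subtypeEquivRight (fun x => Iff.rfl)
  have hA : A = (-(principalSubmatrix M γ)).submatrix e₁ e₁ := by
    ext p q
    simp [A, e₁, principalSubmatrix, Equiv.subtypeEquivRight]; rfl
  have hcard : Fintype.card (s : Type) = γ.card := by
    rw [Fintype.card_congr e₁, Fintype.card_coe]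
  rw [h1, h2, Matrix.det_fromBlocks_zero₁₂, Matrix.det_one, mul_one, hA,
    Matrix.det_submatrix_equiv_self, Matrix.det_neg, Fintype.card_coe]

theorem uso_violation_of_neg_minor {n : ℕ} (M : Matrix (Fin n) (Fin n) ℝ)
    (α β : Finset (Fin n)) (i : Fin n) (hi : i ∉ β) (hαβ : α = insert i β)
    (hα : (principalSubmatrix M α).det < 0) (hβ : 0 < (principalSubmatrix M β).det)
    (q : Fin n → ℝ)
    (hqα : (Bmat M α)⁻¹.mulVec q i ≠ 0) (hqβ : (Bmat M β)⁻¹.mulVec q i ≠ 0) :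
    0 < (Bmat M α)⁻¹.mulVec q i * (Bmat M β)⁻¹.mulVec q i := by
  classical
  set dα := (Bmat M α).det with hdα
  set dβ := (Bmat M β).det with hdβ
  have hdαv : dα = (-1) ^ α.card * (principalSubmatrix M α).det := Bmat_det M α
  have hdβv : dβ = (-1) ^ β.card * (principalSubmatrix M β).det := Bmat_det M β
  have hcard : α.card = β.card + 1 := by rw [hαβ, Finset.card_insert_of_notMem hi]
  have hdα0 : dα ≠ 0 := by
    rw [hdαv]
    exact mul_ne_zero (pow_ne_zero _ (by norm_num)) (ne_of_lt hα)
  have hdβ0 : dβ ≠ 0 := by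
    rw [hdβv]
    exact mul_ne_zero (pow_ne_zero _ (by norm_num)) (ne_of_gt hβ)
  -- inverse formula via cramer
  have hinv : ∀ γ : Finset (Fin n), (Bmat M γ).det ≠ 0 →
      (Bmat M γ)⁻¹.mulVec q i =
        ((Bmat M γ).det)⁻¹ * ((Bmat M γ).updateCol i q).det := by
    intro γ hγ
    have hu : IsUnit (Bmat M γ).det := isUnit_iff_ne_zero.mpr hγ
    rw [Matrix.nonsing_inv_apply _ hu, Matrix.smul_mulVec,
      ← Matrix.cramer_eq_adjugate_mulVec]
    simp [Matrix.cramer_apply, IsUnit.unit_spec]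
  have hcols : (Bmat M α).updateCol i q = (Bmat M β).updateCol i q := by
    ext a b
    by_cases hb : b = i
    · subst hb; simp [Matrix.updateCol_self]
    · rw [Matrix.updateCol_ne hb, Matrix.updateCol_ne hb]
      have : b ∈ α ↔ b ∈ β := by rw [hαβ, Finset.mem_insert]; tauto
      simp [Bmat, this]
  set c := ((Bmat M α).updateCol i q).det with hc
  have hA : (Bmat M α)⁻¹.mulVec q i = dα⁻¹ * c := hinv α hdα0
  have hB : (Bmat M β)⁻¹.mulVec q i = dβ⁻¹ * c := by
    rw [hinv β hdβ0, ← hcols]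
  have hc0 : c ≠ 0 := by
    intro h
    apply hqα
    rw [hA, h, mul_zero]
  have hprod : 0 < dα * dβ := by
    rw [hdαv, hdβv, hcard]
    have : (-1 : ℝ) ^ (β.card + 1) * (principalSubmatrix M α).det *
        ((-1 : ℝ) ^ β.card * (principalSubmatrix M β).det) =
        ((-1 : ℝ) ^ β.card * (-1 : ℝ) ^ β.card) *
          (-1 * ((principalSubmatrix M α).det * (principalSubmatrix M β).det)) := by
      ring
    rw [this, ← pow_add, ← two_mul, pow_mul]
    have h1 : ((-1 : ℝ) ^ 2) ^ β.card = 1 := by norm_num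
    rw [h1, one_mul]
    nlinarith
  rw [hA, hB]
  have : dα⁻¹ * c * (dβ⁻¹ * c) = c ^ 2 * (dα * dβ)⁻¹ := by
    field_simp
  rw [this]
  positivity
end

section
/- Let M be non-degenerate with rational entries of total bit-size σ, and define q ∈ ℝ^n by q_i = 2^{-4iσ}. Then q is non-degenerate for M: for every α ⊆ [n] and every i, (B_α(M)^{-1}q)_i ≠ 0. -/
/-- The principal submatrix of a rational matrix `M` indexed by `α`. -/
def principalSubmatrixQ {n : ℕ} (M : Matrix (Fin n) (Fin n) ℚ) (α : Finset (Fin n)) :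
    Matrix α α ℚ :=
  M.submatrix (fun i => (i : Fin n)) (fun j => (j : Fin n))

/-- The matrix `B_α(M)` whose `j`-th column is `-M_{•j}` for `j ∈ α` and `e_j`
otherwise. -/
def BmatQ {n : ℕ} (M : Matrix (Fin n) (Fin n) ℚ) (α : Finset (Fin n)) :
    Matrix (Fin n) (Fin n) ℚ :=
  fun i j => if j ∈ α then -M i j else if i = j then 1 else 0

/-- The number of bits needed to write the rational `q`. -/
def ratBitSize (q : ℚ) : ℕ := q.num.natAbs.size + q.den.size

/-- The total binary encoding length of a rational matrix. -/
def matBitSize {n : ℕ} (M : Matrix (Fin n) (Fin n) ℚ) : ℕ :=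
  ∑ i, ∑ j, ratBitSize (M i j)

lemma aux_den_mul (q : ℚ) : (q.den : ℚ) * q = q.num := by
  rw [mul_comm, Rat.mul_den_eq_num]

lemma aux_int_mul {q : ℚ} {c : ℕ} (h : q.den ∣ c) : ∃ z : ℤ, (c : ℚ) * q = z := by
  obtain ⟨t, rfl⟩ := h
  refine ⟨t * q.num, ?_⟩
  have : ((q.den * t : ℕ) : ℚ) * q = t * ((q.den : ℚ) * q) := by push_cast; ring
  rw [this, aux_den_mul]
  push_cast; ring

lemma aux_det_int {n : ℕ} (S : Matrix (Fin n) (Fin n) ℚ) (c : Fin n → ℕ)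
    (h : ∀ k l, ∃ z : ℤ, (c l : ℚ) * S k l = z) :
    ∃ z : ℤ, ((∏ l, c l : ℕ) : ℚ) * S.det = z := by
  choose N hN using h
  refine ⟨(Matrix.of N).det, ?_⟩
  have hmap : (Matrix.of fun k l => (c l : ℚ) * S k l) =
      (Int.castRingHom ℚ).mapMatrix (Matrix.of N) := by
    ext k l
    simp [Matrix.map_apply, hN k l]
  calc ((∏ l, c l : ℕ) : ℚ) * S.det = (∏ l, (c l : ℚ)) * S.det := by push_cast; ring
    _ = (Matrix.of fun k l => (c l : ℚ) * S k l).det := (Matrix.det_mul_row _ _).symm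
    _ = ((Int.castRingHom ℚ) ((Matrix.of N).det)) := by
        rw [hmap, ← RingHom.map_det]
    _ = _ := rfl

lemma aux_det_abs_le {n : ℕ} (S m : Matrix (Fin n) (Fin n) ℚ)
    (hm : ∀ k l, 1 ≤ m k l) (h : ∀ k l, |S k l| ≤ m k l) :
    |S.det| ≤ (Nat.factorial n : ℚ) * ∏ k, ∏ l, m k l := by
  rw [Matrix.det_apply]
  refine le_trans (Finset.abs_sum_le_sum_abs _ _) ?_
  have hP : ∀ π : Equiv.Perm (Fin n), |Equiv.Perm.sign π • ∏ i, S (π i) i|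
      ≤ ∏ k, ∏ l, m k l := by
    intro π
    have h1 : |Equiv.Perm.sign π • ∏ i, S (π i) i| = |∏ i, S (π i) i| := by
      rcases Int.units_eq_one_or (Equiv.Perm.sign π) with hs | hs <;> simp [hs]
    rw [h1]
    have h2 : |∏ i, S (π i) i| ≤ ∏ i, m (π i) i := by
      rw [Finset.abs_prod]
      exact Finset.prod_le_prod (fun i _ => abs_nonneg _) (fun i _ => h _ _)
    refine h2.trans ?_
    have h3 : ∏ i, m (π i) i = ∏ p ∈ Finset.univ.image (fun i : Fin n => (π i, i)),
        m p.1 p.2 := by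
      rw [Finset.prod_image]
      intro a _ b _ hab
      simpa using congrArg Prod.snd hab
    rw [h3, ← Finset.prod_product' (f := fun k l => m k l), Finset.univ_product_univ]
    set s := Finset.univ.image (fun i : Fin n => (π i, i)) with hs
    have hsub : s ⊆ (Finset.univ : Finset (Fin n × Fin n)) := Finset.subset_univ _
    rw [← Finset.prod_sdiff hsub]
    have h4 : (1 : ℚ) ≤ ∏ p ∈ (Finset.univ \ s), m p.1 p.2 := by
      have := Finset.prod_le_prod (f := fun _ : Fin n × Fin n => (1:ℚ))
        (g := fun p : Fin n × Fin n => m p.1 p.2) (s := Finset.univ \ s)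
        (fun _ _ => zero_le_one) (fun p _ => hm p.1 p.2)
      simpa using this
    have h5 : (0 : ℚ) ≤ ∏ p ∈ s, m p.1 p.2 :=
      Finset.prod_nonneg fun p _ => le_trans zero_le_one (hm p.1 p.2)
    nlinarith [mul_le_mul_of_nonneg_right h4 h5]
  calc ∑ π : Equiv.Perm (Fin n), |Equiv.Perm.sign π • ∏ i, S (π i) i|
      ≤ ∑ _π : Equiv.Perm (Fin n), ∏ k, ∏ l, m k l := Finset.sum_le_sum fun π _ => hP π
    _ = (Fintype.card (Equiv.Perm (Fin n)) : ℚ) * ∏ k, ∏ l, m k l := by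
        rw [Finset.sum_const, nsmul_eq_mul]; rfl
    _ = (Nat.factorial n : ℚ) * ∏ k, ∏ l, m k l := by
        rw [Fintype.card_perm, Fintype.card_fin]

lemma aux_abs_le (q : ℚ) : |q| ≤ (q.num.natAbs : ℚ) := by
  rw [← Rat.num_div_den q, abs_div]
  have h1 : |((q.den : ℚ))| = (q.den : ℚ) := abs_of_nonneg (by positivity)
  have h2 : |((q.num : ℚ))| = (q.num.natAbs : ℚ) := by rw [Nat.cast_natAbs, Int.cast_abs]
  rw [h1, h2, Rat.num_div_den]
  exact div_le_self (by positivity) (by exact_mod_cast q.pos)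

lemma aux_two_max (q : ℚ) : 2 * max 1 |q| ≤ (2 : ℚ) ^ ratBitSize q := by
  have hs : max 1 |q| ≤ (2 : ℚ) ^ q.num.natAbs.size := by
    refine max_le (one_le_pow₀ (by norm_num)) ?_
    refine (aux_abs_le q).trans ?_
    have := Nat.lt_size_self q.num.natAbs
    calc (q.num.natAbs : ℚ) ≤ ((2 ^ q.num.natAbs.size : ℕ) : ℚ) := by exact_mod_cast this.le
      _ = (2 : ℚ) ^ q.num.natAbs.size := by push_cast; ring
  have hd : 1 ≤ q.den.size := Nat.size_pos.mpr q.pos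
  calc 2 * max 1 |q| ≤ 2 * (2 : ℚ) ^ q.num.natAbs.size := by linarith
    _ = (2 : ℚ) ^ (q.num.natAbs.size + 1) := by ring
    _ ≤ (2 : ℚ) ^ ratBitSize q := by
        apply pow_le_pow_right₀ (by norm_num)
        unfold ratBitSize; omega

lemma aux_den_le (q : ℚ) : q.den ≤ 2 ^ ratBitSize q := by
  have h1 : q.den < 2 ^ q.den.size := Nat.lt_size_self q.den
  have : 2 ^ q.den.size ≤ 2 ^ ratBitSize q :=
    Nat.pow_le_pow_right (by norm_num) (by unfold ratBitSize; omega)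
  omega

lemma aux_one_le_rbs (q : ℚ) : 1 ≤ ratBitSize q := by
  have := Nat.size_pos.mpr q.pos
  unfold ratBitSize; omega

lemma aux_geom_sum (K : ℕ) : ∑ u ∈ Finset.range K, ((2 : ℚ)⁻¹) ^ u ≤ 2 := by
  have h : ∀ K : ℕ, ∑ u ∈ Finset.range K, ((2 : ℚ)⁻¹) ^ u = 2 - 2 * ((2:ℚ)⁻¹) ^ K := by
    intro K
    induction K with
    | zero => simp
    | succ K ih => rw [Finset.sum_range_succ, ih]; ring
  rw [h]
  have : (0:ℚ) ≤ ((2:ℚ)⁻¹) ^ K := by positivity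
  linarith

lemma aux_geom_tail (c : ℚ) (hc : 0 ≤ c) (a N : ℕ) :
    ∑ t ∈ Finset.range N, (if a < t then c * ((2:ℚ)⁻¹) ^ (t - a - 1) else 0) ≤ 2 * c := by
  have h1 : (Finset.range N).filter (fun t => a < t) = Finset.Ico (a+1) N := by
    ext t
    simp only [Finset.mem_filter, Finset.mem_range, Finset.mem_Ico]
    omega
  rw [← Finset.sum_filter, h1, Finset.sum_Ico_eq_sum_range]
  calc ∑ u ∈ Finset.range (N - (a+1)), c * ((2:ℚ)⁻¹) ^ (a + 1 + u - a - 1)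
      = ∑ u ∈ Finset.range (N - (a+1)), c * ((2:ℚ)⁻¹) ^ u := by
        refine Finset.sum_congr rfl fun u _ => ?_
        have hu : a + 1 + u - a - 1 = u := by omega
        rw [hu]
    _ = c * ∑ u ∈ Finset.range (N - (a+1)), ((2:ℚ)⁻¹) ^ u := by rw [Finset.mul_sum]
    _ ≤ c * 2 := mul_le_mul_of_nonneg_left (aux_geom_sum _) hc
    _ = 2 * c := by ring

lemma aux_mulVec_B {n : ℕ} (M : Matrix (Fin n) (Fin n) ℚ) (α : Finset (Fin n))
    (v : Fin n → ℚ) (i : Fin n) :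
    (BmatQ M α).mulVec v i =
      -(∑ j ∈ α, M i j * v j) + (if i ∈ α then 0 else v i) := by
  rw [Matrix.mulVec, dotProduct]
  have h1 : ∀ j : Fin n, BmatQ M α i j * v j =
      if j ∈ α then -(M i j * v j) else (if i = j then v j else 0) := by
    intro j
    unfold BmatQ
    split_ifs <;> ring
  calc (∑ j, BmatQ M α i j * v j)
      = ∑ j, (if j ∈ α then -(M i j * v j) else (if i = j then v j else 0)) := by
        exact Finset.sum_congr rfl fun j _ => h1 j
    _ = (∑ j ∈ Finset.univ.filter (· ∈ α), -(M i j * v j)) +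
        ∑ j ∈ Finset.univ.filter (¬ · ∈ α), (if i = j then v j else 0) := Finset.sum_ite _ _
    _ = -(∑ j ∈ α, M i j * v j) + (if i ∈ α then 0 else v i) := by
        rw [Finset.filter_univ_mem, ← Finset.sum_neg_distrib]
        congr 1
        rw [Finset.sum_ite_eq]
        by_cases h : i ∈ α <;> simp [h]

lemma aux_Bdet {n : ℕ} (M : Matrix (Fin n) (Fin n) ℚ) (α : Finset (Fin n))
    (hα : (principalSubmatrixQ M α).det ≠ 0) : (BmatQ M α).det ≠ 0 := by
  intro hdet
  obtain ⟨v, hv0, hBv⟩ := Matrix.exists_mulVec_eq_zero_iff.mpr hdet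
  have hmul : ∀ i : Fin n,
      -(∑ j ∈ α, M i j * v j) + (if i ∈ α then 0 else v i) = 0 := by
    intro i
    rw [← aux_mulVec_B]
    exact congrFun hBv i
  have hsub : ∀ j : Fin n, j ∈ α → v j = 0 := by
    have hw : (principalSubmatrixQ M α).mulVec (fun j : α => v j) = 0 := by
      funext k
      have hk := hmul k
      rw [if_pos k.2] at hk
      rw [Matrix.mulVec, dotProduct]
      have : ∑ j : α, principalSubmatrixQ M α k j * v j = ∑ j ∈ α, M (k : Fin n) j * v j := by
        rw [← Finset.sum_coe_sort α (fun j => M (k : Fin n) j * v j)]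
        rfl
      rw [Pi.zero_apply, this]
      linarith
    have hw0 : (fun j : α => v j) = 0 := by
      by_contra hne
      exact hα (Matrix.exists_mulVec_eq_zero_iff.mp ⟨_, hne, hw⟩)
    intro j hj
    exact congrFun hw0 ⟨j, hj⟩
  apply hv0
  funext j
  by_cases hj : j ∈ α
  · exact hsub j hj
  · have h := hmul j
    rw [if_neg hj] at h
    have : ∑ k ∈ α, M j k * v k = 0 :=
      Finset.sum_eq_zero fun k hk => by rw [hsub k hk, mul_zero]
    rw [this] at h
    simpa using h

theorem nondegenerate_q_exists {n : ℕ} (M : Matrix (Fin n) (Fin n) ℚ) (σ : ℕ)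
    (hσ : matBitSize M ≤ σ)
    (hM : ∀ α : Finset (Fin n), (principalSubmatrixQ M α).det ≠ 0)
    (q : Fin n → ℚ) (hq : q = fun i : Fin n => ((2 : ℚ) ^ (4 * ((i : ℕ) + 1) * σ))⁻¹) :
    ∀ (α : Finset (Fin n)) (i : Fin n), (BmatQ M α)⁻¹.mulVec q i ≠ 0 := by
  subst hq
  intro α i
  set B := BmatQ M α with hB
  have hdet : B.det ≠ 0 := aux_Bdet M α (hM α)
  -- basic size facts
  have hσ1 : 1 ≤ σ := by
    have h1 : n * n ≤ matBitSize M := by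
      have : ∀ k : Fin n, n ≤ ∑ l : Fin n, ratBitSize (M k l) := by
        intro k
        calc n = ∑ _l : Fin n, 1 := by simp
          _ ≤ ∑ l : Fin n, ratBitSize (M k l) :=
            Finset.sum_le_sum fun l _ => aux_one_le_rbs (M k l)
      calc n * n = ∑ _k : Fin n, n := by simp [mul_comm]
        _ ≤ ∑ k : Fin n, ∑ l : Fin n, ratBitSize (M k l) :=
          Finset.sum_le_sum fun k _ => this k
        _ = matBitSize M := rfl
    have hn : 1 ≤ n := i.pos
    have h2 : 1 * 1 ≤ n * n := Nat.mul_le_mul hn hn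
    omega
  -- denominators
  set cD : Fin n → ℕ := fun l => ∏ k, (M k l).den with hcD
  set D : ℕ := ∏ l, cD l with hD
  have hD0 : 0 < D := Finset.prod_pos fun l _ => Finset.prod_pos fun k _ => (M k l).pos
  have hDQ : (D : ℚ) ≤ 2 ^ σ := by
    have hnat : D ≤ 2 ^ σ := by
      rw [hD, hcD]
      calc ∏ l : Fin n, ∏ k : Fin n, (M k l).den
          ≤ ∏ l : Fin n, ∏ k : Fin n, 2 ^ ratBitSize (M k l) := by
            refine Finset.prod_le_prod' fun l _ => ?_
            exact Finset.prod_le_prod' fun k _ => aux_den_le (M k l)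
        _ = 2 ^ (∑ l : Fin n, ∑ k : Fin n, ratBitSize (M k l)) := by
            simp [Finset.prod_pow_eq_pow_sum]
        _ ≤ 2 ^ σ := by
            apply Nat.pow_le_pow_right (by norm_num)
            rw [Finset.sum_comm]
            exact hσ
    exact_mod_cast hnat
  -- factorial bound
  have hmax1 : ∀ k l : Fin n, (1:ℚ) ≤ max 1 |M k l| := fun k l => le_max_left _ _
  have hfac : (Nat.factorial n : ℚ) * ∏ k, ∏ l, max 1 |M k l| ≤ 2 ^ σ := by
    have hf1 : (Nat.factorial n : ℚ) ≤ 2 ^ (n * n) := by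
      have hnat : Nat.factorial n ≤ 2 ^ (n * n) := by
        calc Nat.factorial n ≤ n ^ n := Nat.factorial_le_pow n
          _ ≤ (2 ^ n) ^ n := Nat.pow_le_pow_left (Nat.le_of_lt (Nat.lt_two_pow_self)) n
          _ = 2 ^ (n * n) := by rw [← pow_mul]
      exact_mod_cast hnat
    have hPnn : (0:ℚ) ≤ ∏ k, ∏ l, max 1 |M k l| :=
      Finset.prod_nonneg fun k _ => Finset.prod_nonneg fun l _ =>
        le_trans zero_le_one (hmax1 k l)
    have h2m : ∏ k, ∏ l, ((2:ℚ) * max 1 |M k l|) ≤ (2:ℚ) ^ σ := by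
      calc ∏ k, ∏ l, ((2:ℚ) * max 1 |M k l|)
          ≤ ∏ k : Fin n, ∏ l : Fin n, (2:ℚ) ^ ratBitSize (M k l) := by
            refine Finset.prod_le_prod (fun k _ => Finset.prod_nonneg fun l _ => by positivity)
              (fun k _ => Finset.prod_le_prod (fun l _ => by positivity)
                (fun l _ => aux_two_max (M k l)))
        _ = (2:ℚ) ^ (∑ k : Fin n, ∑ l : Fin n, ratBitSize (M k l)) := by
            simp [Finset.prod_pow_eq_pow_sum]
        _ ≤ (2:ℚ) ^ σ := pow_le_pow_right₀ (by norm_num) hσ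
    have hsplit2 : ∏ k, ∏ l, ((2:ℚ) * max 1 |M k l|)
        = 2 ^ (n*n) * ∏ k, ∏ l, max 1 |M k l| := by
      calc ∏ k, ∏ l, ((2:ℚ) * max 1 |M k l|)
          = ∏ k : Fin n, ((2:ℚ)^n * ∏ l, max 1 |M k l|) := by
            refine Finset.prod_congr rfl fun k _ => ?_
            rw [Finset.prod_mul_distrib, Finset.prod_const, Finset.card_univ, Fintype.card_fin]
        _ = (2:ℚ)^(n*n) * ∏ k, ∏ l, max 1 |M k l| := by
            rw [Finset.prod_mul_distrib, Finset.prod_const, Finset.card_univ, Fintype.card_fin,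
              ← pow_mul]
    calc (Nat.factorial n : ℚ) * ∏ k, ∏ l, max 1 |M k l|
        ≤ 2^(n*n) * ∏ k, ∏ l, max 1 |M k l| := mul_le_mul_of_nonneg_right hf1 hPnn
      _ = ∏ k, ∏ l, ((2:ℚ) * max 1 |M k l|) := hsplit2.symm
      _ ≤ 2 ^ σ := h2m
  -- adjugate entries: entry structure of the updateRow matrices
  have hRstruct : ∀ j : Fin n, ∀ k l : Fin n,
      (B.updateRow j (Pi.single i 1)) k l = 0 ∨ (B.updateRow j (Pi.single i 1)) k l = 1 ∨
      (B.updateRow j (Pi.single i 1)) k l = -M k l := by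
    intro j k l
    rw [Matrix.updateRow_apply]
    by_cases hkj : k = j
    · rw [if_pos hkj, Pi.single_apply]
      split_ifs <;> tauto
    · rw [if_neg hkj, hB]
      simp only [BmatQ]
      split_ifs <;> tauto
  have hAb : ∀ j : Fin n, |B.adjugate i j| ≤ 2 ^ σ := by
    intro j
    rw [Matrix.adjugate_apply]
    refine (aux_det_abs_le (B.updateRow j (Pi.single i 1))
      (fun k l => max 1 |M k l|) (fun k l => le_max_left _ _) ?_).trans hfac
    intro k l
    rcases hRstruct j k l with h | h | h
    · rw [h, abs_zero]; exact le_trans zero_le_one (le_max_left _ _)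
    · rw [h, abs_one]; exact le_max_left _ _
    · rw [h, abs_neg]; exact le_max_right _ _
  have hint : ∀ j : Fin n, ∃ z : ℤ, (D:ℚ) * B.adjugate i j = z := by
    intro j
    rw [Matrix.adjugate_apply]
    have hcond : ∀ k l, ∃ z : ℤ, (cD l : ℚ) * (B.updateRow j (Pi.single i 1)) k l = z := by
      intro k l
      rcases hRstruct j k l with h | h | h
      · exact ⟨0, by rw [h]; simp⟩
      · exact ⟨(cD l : ℤ), by rw [h]; simp⟩
      · obtain ⟨z, hz⟩ := aux_int_mul (q := M k l) (c := cD l)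
          (by rw [hcD]; exact Finset.dvd_prod_of_mem (fun k' => (M k' l).den) (Finset.mem_univ k))
        exact ⟨-z, by rw [h, mul_neg, hz]; push_cast; ring⟩
    obtain ⟨z, hz⟩ := aux_det_int (B.updateRow j (Pi.single i 1)) cD hcond
    exact ⟨z, by rw [hD]; exact_mod_cast hz⟩
  -- a nonzero adjugate entry in row i exists
  have hex : ∃ j, B.adjugate i j ≠ 0 := by
    by_contra hno
    push_neg at hno
    have h := congrFun (congrFun (Matrix.adjugate_mul B) i) i
    rw [Matrix.mul_apply] at h
    have hz : ∑ j, B.adjugate i j * B j i = 0 :=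
      Finset.sum_eq_zero fun j _ => by rw [hno j, zero_mul]
    have hone : (B.det • (1 : Matrix (Fin n) (Fin n) ℚ)) i i = B.det := by
      simp [Matrix.one_apply]
    rw [hz, hone] at h
    exact hdet h.symm
  set s0 := Finset.univ.filter (fun j => B.adjugate i j ≠ 0) with hs0
  have hne : s0.Nonempty := by
    obtain ⟨j, hj⟩ := hex
    exact ⟨j, by simp [hs0, hj]⟩
  set j₀ := s0.min' hne with hj₀def
  have hj₀ : B.adjugate i j₀ ≠ 0 := (Finset.mem_filter.mp (s0.min'_mem hne)).2
  have hlow : ∀ j : Fin n, j < j₀ → B.adjugate i j = 0 := by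
    intro j hj
    by_contra hjne
    have hjs : j ∈ s0 := by simp [hs0, hjne]
    exact absurd (s0.min'_le j hjs) (not_le.mpr hj)
  have hDpos : (0:ℚ) < D := by exact_mod_cast hD0
  have hlb : (D:ℚ)⁻¹ ≤ |B.adjugate i j₀| := by
    obtain ⟨z, hz⟩ := hint j₀
    have hz0 : z ≠ 0 := by
      intro h0
      rw [h0] at hz
      push_cast at hz
      rcases mul_eq_zero.mp hz with h | h
      · exact absurd h hDpos.ne'
      · exact hj₀ h
    have h1 : (1:ℚ) ≤ |(z:ℚ)| := by
      have := Int.one_le_abs hz0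
      exact_mod_cast this
    have h2 : (D:ℚ) * |B.adjugate i j₀| = |(z:ℚ)| := by
      rw [← abs_of_pos hDpos, ← abs_mul, hz]
    have h3 : (1:ℚ) ≤ (D:ℚ) * |B.adjugate i j₀| := h2 ▸ h1
    calc (D:ℚ)⁻¹ = (D:ℚ)⁻¹ * 1 := by ring
      _ ≤ (D:ℚ)⁻¹ * ((D:ℚ) * |B.adjugate i j₀|) :=
        mul_le_mul_of_nonneg_left h3 (by positivity)
      _ = |B.adjugate i j₀| := by field_simp
  -- reduce the goal
  rw [Matrix.inv_def, Ring.inverse_eq_inv, Matrix.smul_mulVec, Pi.smul_apply,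
    smul_eq_mul]
  apply mul_ne_zero (inv_ne_zero hdet)
  show (∑ j, B.adjugate i j * ((2:ℚ) ^ (4 * ((j:ℕ) + 1) * σ))⁻¹) ≠ 0
  intro h0
  -- notation
  set Q' : ℚ := ((2:ℚ) ^ (4 * ((j₀:ℕ) + 2) * σ))⁻¹ with hQ'def
  have hQ'pos : 0 < Q' := by positivity
  have hQpos : ∀ j : Fin n, (0:ℚ) < ((2:ℚ) ^ (4 * ((j:ℕ) + 1) * σ))⁻¹ := fun j => by positivity
  set p : Fin n → Prop := fun j => (j₀:ℕ) < (j:ℕ) with hp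
  -- tail sum of the q's
  have hsum : ∑ j ∈ Finset.univ.filter p, ((2:ℚ) ^ (4 * ((j:ℕ) + 1) * σ))⁻¹ ≤ 2 * Q' := by
    have hterm : ∀ j : Fin n, (j₀:ℕ) < (j:ℕ) →
        ((2:ℚ) ^ (4 * ((j:ℕ) + 1) * σ))⁻¹ ≤ Q' * ((2:ℚ)⁻¹) ^ ((j:ℕ) - (j₀:ℕ) - 1) := by
      intro j hjv
      set t := (j:ℕ) - (j₀:ℕ) - 1 with ht
      have hexp : 4 * ((j₀:ℕ) + 2) * σ + t ≤ 4 * ((j:ℕ) + 1) * σ := by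
        have h1 : (j:ℕ) + 1 = (j₀:ℕ) + 2 + t := by omega
        rw [h1]
        have h2 : 4 * ((j₀:ℕ) + 2 + t) * σ = 4 * ((j₀:ℕ) + 2) * σ + 4 * t * σ := by ring
        rw [h2]
        have h3 : t ≤ 4 * t * σ := by
          calc t = t * 1 := (mul_one t).symm
            _ ≤ 4 * t * σ := Nat.mul_le_mul (by omega) hσ1
        omega
      calc ((2:ℚ) ^ (4 * ((j:ℕ) + 1) * σ))⁻¹
          ≤ ((2:ℚ) ^ (4 * ((j₀:ℕ) + 2) * σ + t))⁻¹ := by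
            apply inv_anti₀ (by positivity)
            exact pow_le_pow_right₀ (by norm_num) hexp
        _ = Q' * ((2:ℚ)⁻¹) ^ t := by
            rw [pow_add, mul_inv, hQ'def, inv_pow]
    calc ∑ j ∈ Finset.univ.filter p, ((2:ℚ) ^ (4 * ((j:ℕ) + 1) * σ))⁻¹
        ≤ ∑ j ∈ Finset.univ.filter p, Q' * ((2:ℚ)⁻¹) ^ ((j:ℕ) - (j₀:ℕ) - 1) :=
          Finset.sum_le_sum fun j hj => hterm j (Finset.mem_filter.mp hj).2
      _ = ∑ j : Fin n, (if (j₀:ℕ) < (j:ℕ) then Q' * ((2:ℚ)⁻¹) ^ ((j:ℕ) - (j₀:ℕ) - 1) else 0) := by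
          rw [Finset.sum_filter]
      _ = ∑ t ∈ Finset.range n, (if (j₀:ℕ) < t then Q' * ((2:ℚ)⁻¹) ^ (t - (j₀:ℕ) - 1) else 0) :=
          Fin.sum_univ_eq_sum_range
            (fun t => if (j₀:ℕ) < t then Q' * ((2:ℚ)⁻¹) ^ (t - (j₀:ℕ) - 1) else 0) n
      _ ≤ 2 * Q' := aux_geom_tail Q' hQ'pos.le _ n
  -- split the sum
  have hsplit : (∑ j ∈ Finset.univ.filter p, B.adjugate i j * ((2:ℚ) ^ (4 * ((j:ℕ) + 1) * σ))⁻¹)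
      + B.adjugate i j₀ * ((2:ℚ) ^ (4 * ((j₀:ℕ) + 1) * σ))⁻¹ = 0 := by
    have h := Finset.sum_filter_add_sum_filter_not Finset.univ p
      (fun j => B.adjugate i j * ((2:ℚ) ^ (4 * ((j:ℕ) + 1) * σ))⁻¹)
    have h2 : ∑ j ∈ Finset.univ.filter (fun j => ¬ p j),
        B.adjugate i j * ((2:ℚ) ^ (4 * ((j:ℕ) + 1) * σ))⁻¹
        = B.adjugate i j₀ * ((2:ℚ) ^ (4 * ((j₀:ℕ) + 1) * σ))⁻¹ := by
      refine Finset.sum_eq_single_of_mem j₀ ?_ ?_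
      · simp [hp]
      · intro b hb hbne
        have hble : (b:ℕ) ≤ (j₀:ℕ) := not_lt.mp (Finset.mem_filter.mp hb).2
        have hblt : b < j₀ := by
          have hv : (b:ℕ) ≠ (j₀:ℕ) := fun hc => hbne (Fin.ext hc)
          exact Fin.lt_def.mpr (by omega)
        rw [hlow b hblt, zero_mul]
    rw [h2] at h
    rw [h]
    exact h0
  -- tail bound
  have hT : |∑ j ∈ Finset.univ.filter p, B.adjugate i j * ((2:ℚ) ^ (4 * ((j:ℕ) + 1) * σ))⁻¹|
      ≤ 2 ^ σ * (2 * Q') := by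
    calc |∑ j ∈ Finset.univ.filter p, B.adjugate i j * ((2:ℚ) ^ (4 * ((j:ℕ) + 1) * σ))⁻¹|
        ≤ ∑ j ∈ Finset.univ.filter p, |B.adjugate i j * ((2:ℚ) ^ (4 * ((j:ℕ) + 1) * σ))⁻¹| :=
          Finset.abs_sum_le_sum_abs _ _
      _ ≤ ∑ j ∈ Finset.univ.filter p, (2:ℚ) ^ σ * ((2:ℚ) ^ (4 * ((j:ℕ) + 1) * σ))⁻¹ := by
          refine Finset.sum_le_sum fun j _ => ?_
          rw [abs_mul, abs_of_pos (hQpos j)]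
          exact mul_le_mul_of_nonneg_right (hAb j) (hQpos j).le
      _ = (2:ℚ) ^ σ * ∑ j ∈ Finset.univ.filter p, ((2:ℚ) ^ (4 * ((j:ℕ) + 1) * σ))⁻¹ := by
          rw [Finset.mul_sum]
      _ ≤ 2 ^ σ * (2 * Q') := mul_le_mul_of_nonneg_left hsum (by positivity)
  -- head lower bound
  have hQj₀ : ((2:ℚ) ^ (4 * ((j₀:ℕ) + 1) * σ))⁻¹ = (2:ℚ) ^ (4 * σ) * Q' := by
    have he : 4 * ((j₀:ℕ) + 2) * σ = 4 * ((j₀:ℕ) + 1) * σ + 4 * σ := by ring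
    rw [hQ'def, he, pow_add, mul_inv]
    have h2 : ((2:ℚ) ^ (4 * σ)) ≠ 0 := by positivity
    field_simp
  have hH : (D:ℚ)⁻¹ * ((2:ℚ) ^ (4 * σ) * Q')
      ≤ |B.adjugate i j₀ * ((2:ℚ) ^ (4 * ((j₀:ℕ) + 1) * σ))⁻¹| := by
    rw [abs_mul, abs_of_pos (hQpos j₀), hQj₀]
    exact mul_le_mul_of_nonneg_right hlb (by positivity)
  -- strict comparison
  have hk1 : (D:ℚ) * 2 ^ (σ + 1) < 2 ^ (4 * σ) := by
    calc (D:ℚ) * 2 ^ (σ + 1) ≤ 2 ^ σ * 2 ^ (σ + 1) :=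
          mul_le_mul_of_nonneg_right hDQ (by positivity)
      _ = 2 ^ (2 * σ + 1) := by
          rw [← pow_add]
          congr 1
          omega
      _ < 2 ^ (4 * σ) := by
          apply pow_lt_pow_right₀ (by norm_num)
          omega
  have hk2 : (2:ℚ) ^ σ * (2 * Q') < (D:ℚ)⁻¹ * ((2:ℚ) ^ (4 * σ) * Q') := by
    have e1 : (2:ℚ) ^ σ * (2 * Q') = 2 ^ (σ + 1) * Q' := by rw [pow_succ]; ring
    have e2 : (D:ℚ)⁻¹ * ((2:ℚ) ^ (4 * σ) * Q') = ((2:ℚ) ^ (4 * σ) * Q') / D :=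
      inv_mul_eq_div _ _
    rw [e1, e2, lt_div_iff₀ hDpos]
    calc 2 ^ (σ + 1) * Q' * (D:ℚ) = ((D:ℚ) * 2 ^ (σ + 1)) * Q' := by ring
      _ < 2 ^ (4 * σ) * Q' := mul_lt_mul_of_pos_right hk1 hQ'pos
  -- contradiction
  have habs : |B.adjugate i j₀ * ((2:ℚ) ^ (4 * ((j₀:ℕ) + 1) * σ))⁻¹|
      = |∑ j ∈ Finset.univ.filter p, B.adjugate i j * ((2:ℚ) ^ (4 * ((j:ℕ) + 1) * σ))⁻¹| := by
    have hneg : B.adjugate i j₀ * ((2:ℚ) ^ (4 * ((j₀:ℕ) + 1) * σ))⁻¹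
        = -(∑ j ∈ Finset.univ.filter p, B.adjugate i j * ((2:ℚ) ^ (4 * ((j:ℕ) + 1) * σ))⁻¹) := by
      linarith [hsplit]
    rw [hneg, abs_neg]
  linarith [hH, hT, hk2, habs.le, habs.ge]
end
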